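/- Let K be a field, V and W finite-dimensional K[x,y]-modules, and φ: L_V → L_W an isomorphism of their associated Lie algebras L_V = K⟨P,Q⟩ ⋉ V and L_W = K⟨S,T⟩ ⋉ W. Set W₁ = φ(V) ∩ W and V₁ = φ⁻¹(W₁). Then V₁ is a K[x,y]-submodule of V and W₁ is a K[x,y]-submodule of W. Moreover: (i) if φ(V) + W = L_W then dim V/V₁ = dim W/W₁ = 2; (ii) if dim (φ(V)+W)/W = 1 then dim V/V₁ = dim W/W₁ = 1. -/
import Mathlib


/-- The bracket of the semidirect product `L_V = K⟨P,Q⟩ ⋉ V` on `(K × K) × V`. -/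
def lieBk {K V : Type*} [Field K] [AddCommGroup V] [Module K V]
    (P Q : V →ₗ[K] V) (a b : (K × K) × V) : (K × K) × V :=
  (0, (a.1.1 • P + a.1.2 • Q) b.2 - (b.1.1 • P + b.1.2 • Q) a.2)

/-- The abelian ideal `{0} ⊕ V` of `L_V`. -/
def vEmb (K V : Type*) [Field K] [AddCommGroup V] [Module K V] :
    Submodule K ((K × K) × V) :=
  (⊥ : Submodule K (K × K)).prod (⊤ : Submodule K V)

section Aux
open Submodule Module

lemma mem_vEmb {K V : Type*} [Field K] [AddCommGroup V] [Module K V] (x : (K × K) × V) :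
    x ∈ vEmb K V ↔ x.1 = 0 := by
  simp [vEmb, Submodule.mem_prod]

lemma vEmb_eq_range {K V : Type*} [Field K] [AddCommGroup V] [Module K V] :
    vEmb K V = LinearMap.range (LinearMap.inr K (K × K) V) := by
  ext x
  simp [mem_vEmb, LinearMap.range_inr, LinearMap.mem_ker, LinearMap.fst_apply]

lemma finrank_vEmb {K V : Type*} [Field K] [AddCommGroup V] [Module K V] :
    Module.finrank K (vEmb K V) = Module.finrank K V := by
  rw [vEmb_eq_range, LinearMap.finrank_range_of_inj LinearMap.inr_injective]

end Aux

/-- Lemma 2: W₁ = φ(V) ∩ W and V₁ = φ⁻¹(W₁) are submodules, and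
their codimensions are 2 (resp. 1) if φ(V) + W = L_W (resp. dim (φ(V)+W)/W = 1). -/
theorem stmt_11 {K V W : Type*} [Field K] [AddCommGroup V] [Module K V]
    [AddCommGroup W] [Module K W] [FiniteDimensional K V] [FiniteDimensional K W]
    (P Q : V →ₗ[K] V) (S T : W →ₗ[K] W)
    (hPQ : ∀ v, P (Q v) = Q (P v)) (hST : ∀ w, S (T w) = T (S w))
    (φ : ((K × K) × V) ≃ₗ[K] ((K × K) × W))
    (hφ : ∀ a b, φ (lieBk P Q a b) = lieBk S T (φ a) (φ b)) :
    (∀ z ∈ ((((vEmb K V).map (φ : ((K × K) × V) →ₗ[K] (K × K) × W)) ⊓ vEmb K W).comap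
        (φ : ((K × K) × V) →ₗ[K] (K × K) × W)),
      z.1 = (0 : K × K) ∧
      ((0 : K × K), P z.2) ∈ ((((vEmb K V).map (φ : ((K × K) × V) →ₗ[K] (K × K) × W))
          ⊓ vEmb K W).comap (φ : ((K × K) × V) →ₗ[K] (K × K) × W)) ∧
      ((0 : K × K), Q z.2) ∈ ((((vEmb K V).map (φ : ((K × K) × V) →ₗ[K] (K × K) × W))
          ⊓ vEmb K W).comap (φ : ((K × K) × V) →ₗ[K] (K × K) × W))) ∧
    (∀ z ∈ (((vEmb K V).map (φ : ((K × K) × V) →ₗ[K] (K × K) × W)) ⊓ vEmb K W),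
      z.1 = (0 : K × K) ∧
      ((0 : K × K), S z.2) ∈ (((vEmb K V).map (φ : ((K × K) × V) →ₗ[K] (K × K) × W))
          ⊓ vEmb K W) ∧
      ((0 : K × K), T z.2) ∈ (((vEmb K V).map (φ : ((K × K) × V) →ₗ[K] (K × K) × W))
          ⊓ vEmb K W)) ∧
    ((((vEmb K V).map (φ : ((K × K) × V) →ₗ[K] (K × K) × W)) ⊔ vEmb K W = ⊤) →
      Module.finrank K ↥((((vEmb K V).map (φ : ((K × K) × V) →ₗ[K] (K × K) × W))
          ⊓ vEmb K W).comap (φ : ((K × K) × V) →ₗ[K] (K × K) × W)) + 2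
        = Module.finrank K V ∧
      Module.finrank K ↥(((vEmb K V).map (φ : ((K × K) × V) →ₗ[K] (K × K) × W))
          ⊓ vEmb K W) + 2 = Module.finrank K W) ∧
    ((Module.finrank K ↥(((vEmb K V).map (φ : ((K × K) × V) →ₗ[K] (K × K) × W))
          ⊔ vEmb K W) = Module.finrank K ↥(vEmb K W) + 1) →
      Module.finrank K ↥((((vEmb K V).map (φ : ((K × K) × V) →ₗ[K] (K × K) × W))
          ⊓ vEmb K W).comap (φ : ((K × K) × V) →ₗ[K] (K × K) × W)) + 1
        = Module.finrank K V ∧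
      Module.finrank K ↥(((vEmb K V).map (φ : ((K × K) × V) →ₗ[K] (K × K) × W))
          ⊓ vEmb K W) + 1 = Module.finrank K W) := by
  classical
  set M := (vEmb K V).map (φ : ((K × K) × V) →ₗ[K] (K × K) × W) with hM
  have hmemM : ∀ x : (K × K) × W, x ∈ M ↔ (φ.symm x).1 = 0 := by
    intro x
    constructor
    · rintro ⟨u, hu, rfl⟩
      simp only [SetLike.mem_coe, mem_vEmb] at hu
      simpa using hu
    · intro hx
      exact ⟨φ.symm x, (mem_vEmb _).2 hx, φ.apply_symm_apply x⟩
  have hbk : ∀ (a b : K) (z : (K × K) × W),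
      lieBk S T ((a, b), (0 : W)) z = (0, (a • S + b • T) z.2) := by
    intro a b z
    simp [lieBk]
  have hbkV : ∀ (a b : K) (z : (K × K) × V),
      lieBk P Q ((a, b), (0 : V)) z = (0, (a • P + b • Q) z.2) := by
    intro a b z
    simp [lieBk]
  refine ⟨?_, ?_, ?_, ?_⟩
  · -- V₁ part
    intro z hz
    rw [Submodule.mem_comap, Submodule.mem_inf] at hz
    obtain ⟨hzM, hzN⟩ := hz
    have hz1 : z.1 = 0 := by
      have := (hmemM (φ z)).1 hzM
      simpa using this
    have key : ∀ (a b : K), ((0 : K × K), (a • P + b • Q) z.2) ∈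
        (M ⊓ vEmb K W).comap (φ : ((K × K) × V) →ₗ[K] (K × K) × W) := by
      intro a b
      have heq : ((0 : K × K), (a • P + b • Q) z.2) = lieBk P Q ((a, b), (0 : V)) z :=
        (hbkV a b z).symm
      rw [Submodule.mem_comap, Submodule.mem_inf]
      constructor
      · rw [heq]
        exact ⟨lieBk P Q ((a, b), (0 : V)) z, (mem_vEmb _).2 rfl, rfl⟩
      · rw [heq, mem_vEmb]
        show (φ (lieBk P Q ((a, b), (0 : V)) z)).1 = 0
        rw [hφ]
        rfl
    refine ⟨hz1, ?_, ?_⟩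
    · have := key 1 0; simpa using this
    · have := key 0 1; simpa using this
  · -- W₁ part
    intro z hz
    rw [Submodule.mem_inf] at hz
    obtain ⟨hzM, hzN⟩ := hz
    have hz1 : z.1 = 0 := (mem_vEmb z).1 hzN
    have key : ∀ (a b : K), ((0 : K × K), (a • S + b • T) z.2) ∈ M ⊓ vEmb K W := by
      intro a b
      obtain ⟨u, hu, hu2⟩ := hzM
      have hu2' : φ u = z := hu2
      have heq : ((0 : K × K), (a • S + b • T) z.2) = lieBk S T ((a, b), (0 : W)) z :=
        (hbk a b z).symm
      have hcalc : lieBk S T ((a, b), (0 : W)) z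
          = φ (lieBk P Q (φ.symm ((a, b), (0 : W))) u) := by
        rw [hφ, φ.apply_symm_apply, hu2']
      rw [Submodule.mem_inf]
      constructor
      · rw [heq, hcalc]
        exact ⟨_, (mem_vEmb _).2 rfl, rfl⟩
      · rw [heq, mem_vEmb]
        rfl
    refine ⟨hz1, ?_, ?_⟩
    · have := key 1 0; simpa using this
    · have := key 0 1; simpa using this
  all_goals (
    intro h
    have h2 : Module.finrank K (K × K) = 2 := by
      rw [Module.finrank_prod, Module.finrank_self]
    have hVW : Module.finrank K V = Module.finrank K W := by
      have h1 := φ.finrank_eq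
      simp only [Module.finrank_prod, Module.finrank_self] at h1
      omega
    have hrM : Module.finrank K M = Module.finrank K V := by
      rw [hM, LinearEquiv.finrank_map_eq, finrank_vEmb]
    have hrN : Module.finrank K (vEmb K W) = Module.finrank K W := finrank_vEmb
    have hcomap : Module.finrank K ((M ⊓ vEmb K W).comap
        (φ : ((K × K) × V) →ₗ[K] (K × K) × W)) = Module.finrank K (M ⊓ vEmb K W : Submodule K _) := by
      rw [Submodule.comap_equiv_eq_map_symm, LinearEquiv.finrank_map_eq]
    have hsum := Submodule.finrank_sup_add_finrank_inf_eq M (vEmb K W)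
    have htot : Module.finrank K ((K × K) × W) = 2 + Module.finrank K W := by
      simp only [Module.finrank_prod, Module.finrank_self]
    first
    | (rw [h, finrank_top, htot, hrM, hrN] at hsum
       constructor <;> omega)
    | (rw [h, hrM, hrN] at hsum
       constructor <;> omega))
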